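/- arXiv:0903.3642 — 3 statements merged into one kernel-verified Lean document; each statement's English description precedes it below -/
import Mathlib

section
/- Let Q ⊂ ℝ^d be compact. The family C_ℓ of subsets of Q that are a union of at most ℓ closed convex subsets of Q is closed in the hyperspace of nonempty closed subsets of Q equipped with the Hausdorff metric; in particular C_ℓ is compact in the Hausdorff metric. -/
/-!
`C_ℓ` is the image of the `ℓ`-th power of the family of convex compact subsets of `Q` under the
union map `(K₁, …, K_ℓ) ↦ K₁ ∪ ⋯ ∪ K_ℓ`, which is `1`-Lipschitz for the Hausdorff metric. That
family is compact: the compact subsets of `Q` form a compact family, and convexity is a closed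
condition, since it says `a • K + b • K ⊆ K`, whose left side depends continuously on `K`, and
inclusion `L ⊆ K ↔ L ∪ K = K` is a closed relation.
-/

open Set
open scoped Pointwise

namespace TopologicalSpace.NonemptyCompacts

section Topological

variable {α : Type*} [TopologicalSpace α]

noncomputable def iUnion {ι : Type*} [Finite ι] [Nonempty ι] (K : ι → NonemptyCompacts α) :
    NonemptyCompacts α where
  carrier := ⋃ i, K i
  isCompact' := isCompact_iUnion fun i => (K i).isCompact
  nonempty' := nonempty_iUnion.2 ⟨Classical.arbitrary ι, (K _).nonempty⟩

@[simp]
theorem coe_iUnion {ι : Type*} [Finite ι] [Nonempty ι] (K : ι → NonemptyCompacts α) :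
    (iUnion K : Set α) = ⋃ i, (K i : Set α) :=
  rfl

variable [T2Space α]

theorem image_iUnion_univ_pi {ι : Type*} [Finite ι] [Nonempty ι] {Q : Set α} (hQ : IsCompact Q)
    (P : Set α → Prop) :
    iUnion '' univ.pi (fun _ : ι => {K : NonemptyCompacts α | (K : Set α) ⊆ Q ∧ P K}) =
      {K : NonemptyCompacts α | (K : Set α) ⊆ Q ∧ ∃ S : ι → Set α,
        (∀ i, IsClosed (S i) ∧ P (S i) ∧ (S i).Nonempty ∧ S i ⊆ Q) ∧ (K : Set α) = ⋃ i, S i} := by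
  ext K
  constructor
  · rintro ⟨L, hL, rfl⟩
    refine ⟨iUnion_subset fun i => (hL i trivial).1, fun i => L i, fun i => ?_, rfl⟩
    exact ⟨(L i).isCompact.isClosed, (hL i trivial).2, (L i).nonempty, (hL i trivial).1⟩
  · rintro ⟨-, S, hS, hK⟩
    refine ⟨fun i => ⟨⟨S i, hQ.of_isClosed_subset (hS i).1 (hS i).2.2.2⟩, (hS i).2.2.1⟩,
      fun i _ => ⟨(hS i).2.2.2, (hS i).2.1⟩, NonemptyCompacts.ext hK.symm⟩

theorem isClosed_setOf_le :
    IsClosed {p : NonemptyCompacts α × NonemptyCompacts α | p.1 ≤ p.2} := by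
  simp_rw [← sup_eq_right]
  exact isClosed_eq continuous_sup continuous_snd

end Topological

theorem lipschitzWith_iUnion {α ι : Type*} [EMetricSpace α] [Fintype ι] [Nonempty ι] :
    LipschitzWith 1 (iUnion : (ι → NonemptyCompacts α) → NonemptyCompacts α) :=
  .of_edist_le fun K L => Metric.hausdorffEDist_iUnion_le.trans <|
    iSup_le fun i => edist_le_pi_edist K L i

theorem isClosed_setOf_convex {𝕜 E : Type*} [Semiring 𝕜] [PartialOrder 𝕜] [TopologicalSpace E]
    [AddCommMonoid E] [ContinuousAdd E] [SMul 𝕜 E] [ContinuousConstSMul 𝕜 E] [T2Space E] :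
    IsClosed {K : NonemptyCompacts E | Convex 𝕜 (K : Set E)} := by
  simp_rw [convex_iff_pointwise_add_subset, ofPred_forall]
  refine isClosed_iInter fun a => isClosed_iInter fun b => isClosed_iInter fun _ =>
    isClosed_iInter fun _ => isClosed_iInter fun _ => ?_
  have hcomb : Continuous fun p : E × E => a • p.1 + b • p.2 := by fun_prop
  have hset : {K : NonemptyCompacts E | a • (K : Set E) + b • (K : Set E) ⊆ (K : Set E)} =
      (fun K => ((K ×ˢ K).map _ hcomb, K)) ⁻¹' {p | p.1 ≤ p.2} := by
    ext K
    rw [mem_ofPred_eq, ← image_smul, ← image_smul, ← image2_add, image2_image_left,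
      image2_image_right, ← image_prod]
    rfl
  rw [hset]
  exact isClosed_setOf_le.preimage (by fun_prop)

end TopologicalSpace.NonemptyCompacts

open TopologicalSpace

/-- The family `C_ℓ` of subsets of a compact `Q ⊂ ℝ^d` that are a union of at
most `ℓ` nonempty closed convex subsets of `Q` is closed in the hyperspace of
nonempty compact subsets with the Hausdorff metric; in particular it is
compact. -/
theorem stmt_4 (d ℓ : ℕ) (Q : Set (EuclideanSpace ℝ (Fin d))) (hQ : IsCompact Q)
    (Cℓ : Set (NonemptyCompacts (EuclideanSpace ℝ (Fin d))))
    (hCℓ : Cℓ = {K : NonemptyCompacts (EuclideanSpace ℝ (Fin d)) |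
      (K : Set (EuclideanSpace ℝ (Fin d))) ⊆ Q ∧
      ∃ S : Fin ℓ → Set (EuclideanSpace ℝ (Fin d)),
        (∀ i, IsClosed (S i) ∧ Convex ℝ (S i) ∧ (S i).Nonempty ∧ S i ⊆ Q) ∧
        (K : Set (EuclideanSpace ℝ (Fin d))) = ⋃ i, S i}) :
    IsClosed Cℓ ∧ IsCompact Cℓ := by
  suffices hcompact : IsCompact Cℓ from ⟨hcompact.isClosed, hcompact⟩
  rcases isEmpty_or_nonempty (Fin ℓ) with hℓ | hℓ
  · convert isCompact_empty
    refine hCℓ.trans (eq_empty_of_forall_notMem fun K ⟨_, S, _, hK⟩ => ?_)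
    simpa [hK] using K.nonempty
  · rw [hCℓ, ← NonemptyCompacts.image_iUnion_univ_pi hQ]
    exact (isCompact_univ_pi fun _ =>
      (NonemptyCompacts.isCompact_subsets_of_isCompact hQ).inter_right
        NonemptyCompacts.isClosed_setOf_convex).image
      NonemptyCompacts.lipschitzWith_iUnion.continuous
end

section
/- Let Q ⊂ ℝ² be compact convex, and let p₁ ≠ p₂ be points in Q with ‖p₁ − p₂‖ = 2l. For 0 < ε < l, the set Y₁₂(ε) = { x ∈ Q : | ‖x−p₁‖ − ‖x−p₂‖ | ≤ 2ε } (the near-bisector region) has Lebesgue measure at most 4 · diam(Q) · (1 + diam(Q)/l) · ε. In particular μ(Y₁₂(ε)) → 0 as ε → 0⁺. -/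
open MeasureTheory Metric RealInnerProductSpace

/-!
With `m` the midpoint of `p₁p₂` and `D = diam Q`, the identity
`‖x - p₁‖² - ‖x - p₂‖² = 2 ⟪p₂ - p₁, x - m⟫` shows that a point of `Q` whose distances to `p₁` and
`p₂` differ by at most `2ε` lies in the slab `|⟪p₂ - p₁, x - m⟫| ≤ 2εD` about the perpendicular
bisector, of width `2εD / l`. It also lies within `D` of `m`, so it lies in a rectangle with sides
`2εD / l` and `2D`, of area `4εD² / l ≤ 4D(1 + D / l)ε`.
-/

theorem inner_sub_sub_midpoint {E : Type*} [NormedAddCommGroup E] [InnerProductSpace ℝ E]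
    (p₁ p₂ x : E) :
    ⟪p₂ - p₁, x - midpoint ℝ p₁ p₂⟫ = (‖x - p₁‖ ^ 2 - ‖x - p₂‖ ^ 2) / 2 := by
  have h₁ : p₂ - p₁ = (x - p₁) - (x - p₂) := by abel
  have h₂ : x - midpoint ℝ p₁ p₂ = (2 : ℝ)⁻¹ • ((x - p₁) + (x - p₂)) := by
    rw [midpoint_eq_smul_add, invOf_eq_inv]; module
  rw [h₁, h₂, real_inner_smul_right, inner_sub_left, inner_add_right, inner_add_right,
    real_inner_self_eq_norm_sq, real_inner_self_eq_norm_sq, real_inner_comm (x - p₂)]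
  ring

theorem norm_sub_midpoint_le {E : Type*} [NormedAddCommGroup E] [NormedSpace ℝ E]
    (p₁ p₂ x : E) : ‖x - midpoint ℝ p₁ p₂‖ ≤ (‖x - p₁‖ + ‖x - p₂‖) / 2 := by
  simpa only [midpoint_self, dist_eq_norm] using dist_midpoint_midpoint_le x x p₁ p₂

theorem abs_inner_sub_sub_midpoint_le {E : Type*} [NormedAddCommGroup E]
    [InnerProductSpace ℝ E] {p₁ p₂ x : E} {δ R : ℝ}
    (hδ : |‖x - p₁‖ - ‖x - p₂‖| ≤ δ) (h₁ : ‖x - p₁‖ ≤ R) (h₂ : ‖x - p₂‖ ≤ R) :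
    |⟪p₂ - p₁, x - midpoint ℝ p₁ p₂⟫| ≤ δ * R := by
  have hsum : |‖x - p₁‖ + ‖x - p₂‖| ≤ 2 * R := by
    rw [abs_of_nonneg (by positivity)]; linarith
  rw [inner_sub_sub_midpoint, abs_div, abs_two, sq_sub_sq, abs_mul]
  nlinarith [mul_le_mul hsum hδ (abs_nonneg _) (by linarith [abs_nonneg (‖x - p₁‖ + ‖x - p₂‖)])]

theorem OrthonormalBasis.volume_setOf_abs_inner_sub_le {ι E : Type*} [Fintype ι]
    [NormedAddCommGroup E] [InnerProductSpace ℝ E] [FiniteDimensional ℝ E]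
    [MeasurableSpace E] [BorelSpace E] (b : OrthonormalBasis ι ℝ E) (c : E) (a : ι → ℝ) :
    volume {x | ∀ i, |⟪b i, x - c⟫| ≤ a i} = ∏ i, ENNReal.ofReal (2 * a i) := by
  have hbox : {x | ∀ i, |⟪b i, x - c⟫| ≤ a i} = (fun x => b.repr (x - c)) ⁻¹'
      ((MeasurableEquiv.toLp 2 (ι → ℝ)).symm ⁻¹' Set.univ.pi fun i => Set.Icc (-a i) (a i)) := by
    ext x
    simp only [Set.mem_ofPred_eq, Set.mem_preimage, Set.mem_pi, Set.mem_univ, true_implies,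
      Set.mem_Icc, MeasurableEquiv.toLp_symm_apply, ← abs_le, b.repr_apply_apply]
  have hpres : MeasurePreserving (fun x => b.repr (x - c)) :=
    b.measurePreserving_repr.comp (measurePreserving_sub_right volume c)
  have hIcc : MeasurableSet (Set.univ.pi fun i => Set.Icc (-a i) (a i)) :=
    MeasurableSet.univ_pi fun _ => measurableSet_Icc
  rw [hbox, hpres.measure_preimage (hIcc.preimage (MeasurableEquiv.measurable _)).nullMeasurableSet,
    (EuclideanSpace.volume_preserving_symm_measurableEquiv_toLp ι).measure_preimage
      hIcc.nullMeasurableSet, volume_pi_pi]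
  simp only [Real.volume_Icc, sub_neg_eq_add, two_mul]

theorem volume_setOf_abs_inner_le_and_norm_le {E : Type*} [NormedAddCommGroup E]
    [InnerProductSpace ℝ E] [FiniteDimensional ℝ E] [MeasurableSpace E] [BorelSpace E]
    (hE : Module.finrank ℝ E = 2) {v : E} (hv : v ≠ 0) (c : E) {a R : ℝ} (hR : 0 ≤ R) :
    volume {x | |⟪v, x - c⟫| ≤ a ∧ ‖x - c‖ ≤ R} ≤ ENNReal.ofReal (4 * a * R / ‖v‖) := by
  have hv' : 0 < ‖v‖ := norm_pos_iff.mpr hv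
  obtain ⟨b, hb⟩ := Orthonormal.exists_orthonormalBasis_extension_of_card_eq
    (v := fun _ : Fin 2 => ‖v‖⁻¹ • v) (s := {0}) (by simpa using hE)
    (by simp [norm_smul, hv'.ne'])
  have hsub : {x | |⟪v, x - c⟫| ≤ a ∧ ‖x - c‖ ≤ R} ⊆
      {x | ∀ i, |⟪b i, x - c⟫| ≤ ![a / ‖v‖, R] i} := by
    rintro x ⟨hslab, hball⟩ i
    fin_cases i
    · change |⟪b 0, x - c⟫| ≤ a / ‖v‖
      rw [hb 0 rfl, real_inner_smul_left, abs_mul, abs_inv, abs_norm, inv_mul_eq_div]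
      exact div_le_div_of_nonneg_right hslab hv'.le
    · change |⟪b 1, x - c⟫| ≤ R
      calc |⟪b 1, x - c⟫| ≤ ‖b 1‖ * ‖x - c‖ := abs_real_inner_le_norm _ _
        _ ≤ R := by simpa [b.orthonormal.1 1] using hball
  calc volume {x | |⟪v, x - c⟫| ≤ a ∧ ‖x - c‖ ≤ R}
      ≤ ∏ i, ENNReal.ofReal (2 * ![a / ‖v‖, R] i) :=
        (measure_mono hsub).trans_eq (b.volume_setOf_abs_inner_sub_le c _)
    _ = ENNReal.ofReal (4 * a * R / ‖v‖) := by
        rw [Fin.prod_univ_two, ← ENNReal.ofReal_mul' (by simpa using hR)]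
        congr 1
        simp only [Matrix.cons_val_zero, Matrix.cons_val_one]
        ring

theorem stmt_11_general (Q : Set (EuclideanSpace ℝ (Fin 2)))
    (hQc : IsCompact Q)
    (p₁ p₂ : EuclideanSpace ℝ (Fin 2)) (hp₁ : p₁ ∈ Q) (hp₂ : p₂ ∈ Q)
    (l : ℝ) (hl : ‖p₁ - p₂‖ = 2 * l)
    (ε : ℝ) (hε : 0 < ε) (hεl : ε < l) :
    volume {x ∈ Q | |‖x - p₁‖ - ‖x - p₂‖| ≤ 2 * ε} ≤
      ENNReal.ofReal (4 * diam Q * (1 + diam Q / l) * ε) := by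
  have hl₀ : 0 < l := hε.trans hεl
  have hp : ‖p₂ - p₁‖ = 2 * l := by rw [norm_sub_rev, hl]
  have hD : ∀ x ∈ Q, ∀ p ∈ Q, ‖x - p‖ ≤ diam Q := fun x hx p hpQ ↦
    dist_eq_norm x p ▸ dist_le_diam_of_mem hQc.isBounded hx hpQ
  have hsub : {x ∈ Q | |‖x - p₁‖ - ‖x - p₂‖| ≤ 2 * ε} ⊆
      {x | |⟪p₂ - p₁, x - midpoint ℝ p₁ p₂⟫| ≤ 2 * ε * diam Q ∧
        ‖x - midpoint ℝ p₁ p₂‖ ≤ diam Q} := by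
    rintro x ⟨hx, hxε⟩
    refine ⟨abs_inner_sub_sub_midpoint_le hxε (hD x hx p₁ hp₁) (hD x hx p₂ hp₂), ?_⟩
    linarith [norm_sub_midpoint_le p₁ p₂ x, hD x hx p₁ hp₁, hD x hx p₂ hp₂]
  have hp₁₂ : p₂ - p₁ ≠ 0 := norm_ne_zero_iff.mp (by rw [hp]; positivity)
  calc volume {x ∈ Q | |‖x - p₁‖ - ‖x - p₂‖| ≤ 2 * ε}
      ≤ ENNReal.ofReal (4 * (2 * ε * diam Q) * diam Q / ‖p₂ - p₁‖) :=
        (measure_mono hsub).trans <| volume_setOf_abs_inner_le_and_norm_le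
          finrank_euclideanSpace_fin hp₁₂ _ diam_nonneg
    _ ≤ ENNReal.ofReal (4 * diam Q * (1 + diam Q / l) * ε) := by
        refine ENNReal.ofReal_le_ofReal ?_
        rw [hp, show 4 * diam Q * (1 + diam Q / l) * ε
          = 4 * diam Q * ε + 4 * (2 * ε * diam Q) * diam Q / (2 * l) by field_simp]
        exact le_add_of_nonneg_left (by have := diam_nonneg (s := Q); positivity)

/-- Measure bound on the near-bisector region: for `Q ⊂ ℝ²` compact convex,
distinct points `p₁, p₂ ∈ Q` with `‖p₁ − p₂‖ = 2l`, and `0 < ε < l`, the set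
`Y₁₂(ε) = { x ∈ Q : |‖x−p₁‖ − ‖x−p₂‖| ≤ 2ε }` satisfies
`μ(Y₁₂(ε)) ≤ 4 · diam(Q) · (1 + diam(Q)/l) · ε`. -/
theorem stmt_11 (Q : Set (EuclideanSpace ℝ (Fin 2)))
    (hQc : IsCompact Q) (hQconv : Convex ℝ Q) (hQint : (interior Q).Nonempty)
    (p₁ p₂ : EuclideanSpace ℝ (Fin 2)) (hp₁ : p₁ ∈ Q) (hp₂ : p₂ ∈ Q)
    (hne : p₁ ≠ p₂) (l : ℝ) (hl : ‖p₁ - p₂‖ = 2 * l)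
    (ε : ℝ) (hε : 0 < ε) (hεl : ε < l) :
    volume {x ∈ Q | |‖x - p₁‖ - ‖x - p₂‖| ≤ 2 * ε} ≤
      ENNReal.ofReal (4 * diam Q * (1 + diam Q / l) * ε) :=
  stmt_11_general Q hQc p₁ p₂ hp₁ hp₂ l hl ε hε hεl
end

section
/- The Voronoi map is continuous in the symmetric difference metric: for Q ⊂ ℝ² compact convex and N distinct points p = (p₁,…,p_N) ∈ Q^N (pᵢ ≠ p_j for i ≠ j), the map p ↦ V(p) sending distinct generator configurations to the N-tuple of Voronoi cells Vᵢ(p) = { q ∈ Q : ‖q−pᵢ‖ ≤ ‖q−p_j‖ ∀ j } is continuous, where the distance between two N-tuples of cells is the sum of the Lebesgue measures of the symmetric differences of corresponding cells. -/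
/-!
Moving every generator by at most `t / 2` changes the sign of `dist q (p i) - dist q (p j)` only
at points `q` where this difference is at most `t` in absolute value. So the symmetric difference
of the old and new `i`-th cells lies in the union over `j ≠ i` of the slabs
`{q ∈ Q | |dist q (p i) - dist q (p j)| ≤ t}`. As `t ↓ 0` these slabs shrink to pieces of
perpendicular bisectors, which are Lebesgue-null lines, so their measures tend to `0`.
-/

open MeasureTheory

/-- The Voronoi cell of generator `i` in `Q`. -/
def voronoiCell (Q : Set (EuclideanSpace ℝ (Fin 2))) {N : ℕ}
    (p : Fin N → EuclideanSpace ℝ (Fin 2)) (i : Fin N) :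
    Set (EuclideanSpace ℝ (Fin 2)) :=
  {q ∈ Q | ∀ j, ‖q - p i‖ ≤ ‖q - p j‖}

open Filter Topology Set

def bisectorSlab {α : Type*} [PseudoMetricSpace α] (Q : Set α) (a b : α) (t : ℝ) : Set α :=
  {q ∈ Q | |dist q a - dist q b| ≤ t}

theorem tendsto_measure_bisectorSlab {E : Type*} [NormedAddCommGroup E] [InnerProductSpace ℝ E]
    [FiniteDimensional ℝ E] [MeasurableSpace E] [BorelSpace E] (μ : Measure E)
    [μ.IsAddHaarMeasure] {Q : Set E} (hQm : MeasurableSet Q) (hQ : μ Q ≠ ⊤) {a b : E}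
    (hab : a ≠ b) :
    Tendsto (fun t => μ (bisectorSlab Q a b t)) (𝓝[>] 0) (𝓝 0) := by
  have hcont : Continuous fun q : E => |dist q a - dist q b| := by fun_prop
  have hlim := tendsto_measure_biInter_gt (μ := μ) (s := bisectorSlab Q a b) (a := (0 : ℝ))
    (fun t _ => (hQm.inter (measurableSet_le hcont.measurable measurable_const)).nullMeasurableSet)
    (fun s t _ hst q hq => ⟨hq.1, hq.2.trans hst⟩)
    ⟨1, one_pos, ne_top_of_le_ne_top hQ (measure_mono fun q hq => hq.1)⟩
  have hbisector : (⋂ t > (0 : ℝ), bisectorSlab Q a b t) ⊆ AffineSubspace.perpBisector a b := by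
    intro q hq
    simp only [mem_iInter] at hq
    rw [SetLike.mem_coe, AffineSubspace.mem_perpBisector_iff_dist_eq, ← sub_eq_zero,
      ← abs_nonpos_iff]
    exact le_of_forall_pos_le_add fun t ht => by simpa using (hq t ht).2
  rwa [measure_mono_null hbisector
    (Measure.addHaar_affineSubspace μ _ (by simpa using hab))] at hlim

theorem abs_dist_sub_dist_le_of_le_of_le {α : Type*} [PseudoMetricSpace α] {q a b a' b' : α}
    {t : ℝ} (ha : dist a a' ≤ t / 2) (hb : dist b b' ≤ t / 2) (h : dist q a ≤ dist q b)
    (h' : dist q b' ≤ dist q a') : |dist q a - dist q b| ≤ t := by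
  have := dist_triangle q a a'
  have := dist_triangle q b' b
  rw [dist_comm b' b] at this
  rw [abs_le]
  constructor <;> linarith

section Voronoi

variable {Q : Set (EuclideanSpace ℝ (Fin 2))} {N : ℕ} {p p' : Fin N → EuclideanSpace ℝ (Fin 2)}
  {i : Fin N} {q : EuclideanSpace ℝ (Fin 2)} {t : ℝ}

theorem mem_voronoiCell_iff :
    q ∈ voronoiCell Q p i ↔ q ∈ Q ∧ ∀ j, dist q (p i) ≤ dist q (p j) := by
  simp only [voronoiCell, mem_ofPred_eq, dist_eq_norm]

theorem exists_dist_lt_of_notMem_voronoiCell (hq : q ∈ Q) (hqi : q ∉ voronoiCell Q p i) :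
    ∃ j, dist q (p j) < dist q (p i) := by
  simpa [mem_voronoiCell_iff, hq] using hqi

theorem symmDiff_voronoiCell_subset (hp' : ∀ k, dist (p k) (p' k) ≤ t / 2) (i : Fin N) :
    symmDiff (voronoiCell Q p i) (voronoiCell Q p' i) ⊆
      ⋃ j ∈ Finset.univ.erase i, bisectorSlab Q (p i) (p j) t := by
  intro q hq
  simp only [mem_iUnion, Finset.mem_erase, Finset.mem_univ, and_true, exists_prop]
  rcases mem_symmDiff.1 hq with ⟨hqp, hqp'⟩ | ⟨hqp', hqp⟩
  · rw [mem_voronoiCell_iff] at hqp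
    obtain ⟨j, hj⟩ := exists_dist_lt_of_notMem_voronoiCell hqp.1 hqp'
    exact ⟨j, fun hji => (hji ▸ hj).false, hqp.1,
      abs_dist_sub_dist_le_of_le_of_le (hp' i) (hp' j) (hqp.2 j) hj.le⟩
  · rw [mem_voronoiCell_iff] at hqp'
    obtain ⟨j, hj⟩ := exists_dist_lt_of_notMem_voronoiCell hqp'.1 hqp
    refine ⟨j, fun hji => (hji ▸ hj).false, hqp'.1, ?_⟩
    rw [abs_sub_comm]
    exact abs_dist_sub_dist_le_of_le_of_le (hp' j) (hp' i) hj.le (hqp'.2 j)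

theorem toReal_measure_symmDiff_voronoiCell_le (μ : Measure (EuclideanSpace ℝ (Fin 2)))
    (hQ : μ Q ≠ ⊤) (hp' : ∀ k, dist (p k) (p' k) ≤ t / 2) (i : Fin N) :
    (μ (symmDiff (voronoiCell Q p i) (voronoiCell Q p' i))).toReal ≤
      ∑ j ∈ Finset.univ.erase i, (μ (bisectorSlab Q (p i) (p j) t)).toReal := by
  have hslab : ∀ j, μ (bisectorSlab Q (p i) (p j) t) ≠ ⊤ := fun j =>
    ne_top_of_le_ne_top hQ (measure_mono fun q hq => hq.1)
  rw [← ENNReal.toReal_sum fun j _ => hslab j]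
  exact ENNReal.toReal_mono (ENNReal.sum_ne_top.2 fun j _ => hslab j)
    ((measure_mono (symmDiff_voronoiCell_subset hp' i)).trans (measure_biUnion_finset_le _ _))

end Voronoi

theorem stmt_12_general (Q : Set (EuclideanSpace ℝ (Fin 2)))
    (hQc : IsCompact Q)
    (N : ℕ) (p : Fin N → EuclideanSpace ℝ (Fin 2))
    (hpdist : ∀ i j, i ≠ j → p i ≠ p j) :
    ∀ ε > 0, ∃ δ > 0, ∀ p' : Fin N → EuclideanSpace ℝ (Fin 2),
      (∀ i, p' i ∈ Q) → (∀ i j, i ≠ j → p' i ≠ p' j) →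
      (∀ i, ‖p i - p' i‖ < δ) →
      ∑ i, (volume (symmDiff (voronoiCell Q p i) (voronoiCell Q p' i))).toReal < ε := by
  intro ε hε
  have hslabs : Tendsto (fun t => ∑ i, ∑ j ∈ Finset.univ.erase i,
      (volume (bisectorSlab Q (p i) (p j) t)).toReal) (𝓝[>] 0) (𝓝 0) := by
    simpa only [Function.comp_def, ENNReal.toReal_zero, Finset.sum_const_zero] using
      tendsto_finsetSum Finset.univ fun i _ => tendsto_finsetSum (Finset.univ.erase i) fun j hj =>
        (ENNReal.tendsto_toReal ENNReal.zero_ne_top).comp <|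
          tendsto_measure_bisectorSlab volume hQc.measurableSet hQc.measure_lt_top.ne
            (hpdist i j (Finset.ne_of_mem_erase hj).symm)
  obtain ⟨t, hsum, ht⟩ := ((hslabs.eventually (gt_mem_nhds hε)).and self_mem_nhdsWithin).exists
  refine ⟨t / 2, half_pos ht, fun p' _ _ hp' => (Finset.sum_le_sum fun i _ => ?_).trans_lt hsum⟩
  exact toReal_measure_symmDiff_voronoiCell_le volume hQc.measure_lt_top.ne
    (fun k => (dist_eq_norm (p k) (p' k)).trans_le (hp' k).le) i

/-- Continuity of the Voronoi map in the symmetric difference metric: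
at any configuration of `N` distinct generators in a compact convex
`Q ⊂ ℝ²`, small perturbations of the generators produce Voronoi cells whose
total symmetric-difference distance is small. -/
theorem stmt_12 (Q : Set (EuclideanSpace ℝ (Fin 2)))
    (hQc : IsCompact Q) (hQconv : Convex ℝ Q) (hQint : (interior Q).Nonempty)
    (N : ℕ) (p : Fin N → EuclideanSpace ℝ (Fin 2))
    (hpQ : ∀ i, p i ∈ Q) (hpdist : ∀ i j, i ≠ j → p i ≠ p j) :
    ∀ ε > 0, ∃ δ > 0, ∀ p' : Fin N → EuclideanSpace ℝ (Fin 2),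
      (∀ i, p' i ∈ Q) → (∀ i j, i ≠ j → p' i ≠ p' j) →
      (∀ i, ‖p i - p' i‖ < δ) →
      ∑ i, (volume (symmDiff (voronoiCell Q p i) (voronoiCell Q p' i))).toReal < ε :=
  stmt_12_general Q hQc N p hpdist
end
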